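/- The language L = {a^n b^m : m ≤ n} ∪ {a^n b^m c : n, m ∈ ℕ} over alphabet {a,b,c} is not recognised by any deterministic VASS with coverability acceptance (in any dimension). -/

import Mathlib

open scoped Classical

/-- A `k`-dimensional vector addition system with states over alphabet `A`.
States are `Fin n`; transitions are labelled by a letter and an effect in `ℤ^k`. -/
structure VASS (k : ℕ) (A : Type) where
  n : ℕ
  trans : Set (Fin n × A × (Fin k → ℤ) × Fin n)
  init : Fin n
  acc : Set (Fin n)

namespace VASS

variable {k : ℕ} {A : Type}

/-- A configuration: a state together with counters in `ℕ^k`. -/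
abbrev Conf (V : VASS k A) := Fin V.n × (Fin k → ℕ)

/-- `Run V c w c'`: there is a valid run of `V` from configuration `c` to `c'`
reading the word `w`, with counters staying nonnegative throughout. -/
inductive Run (V : VASS k A) : V.Conf → List A → V.Conf → Prop
  | nil (c : V.Conf) : Run V c [] c
  | cons {q : Fin V.n} {v : Fin k → ℕ} {a : A} {d : Fin k → ℤ} {q' : Fin V.n}
      {w : List A} {c' : V.Conf} :
      (q, a, d, q') ∈ V.trans →
      (∀ i, 0 ≤ (v i : ℤ) + d i) →
      Run V (q', fun i => ((v i : ℤ) + d i).toNat) w c' →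
      Run V (q, v) (a :: w) c'

/-- The initial configuration: initial state with all counters zero. -/
def initConf (V : VASS k A) : V.Conf := (V.init, fun _ => 0)

/-- Coverability acceptance: some run ends in an accepting state. -/
def LangCover (V : VASS k A) : Set (List A) :=
  {w | ∃ c, V.Run V.initConf w c ∧ c.1 ∈ V.acc}

/-- Reachability acceptance: some run ends in an accepting state with all counters zero. -/
def LangReach (V : VASS k A) : Set (List A) :=
  {w | ∃ c, V.Run V.initConf w c ∧ c.1 ∈ V.acc ∧ c.2 = fun _ => 0}

/-- Deterministic: at most one outgoing transition per state and letter. -/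
def Det (V : VASS k A) : Prop :=
  ∀ q a d₁ q₁ d₂ q₂, (q, a, d₁, q₁) ∈ V.trans → (q, a, d₂, q₂) ∈ V.trans →
    d₁ = d₂ ∧ q₁ = q₂

/-- A resolver: given the history (the word read so far) and the next letter,
choose the effect and target state of the transition to take. -/
def Resolver (V : VASS k A) := List A → A → (Fin k → ℤ) × Fin V.n

/-- One step of the run built by a resolver (carrying the prefix read so far). -/
noncomputable def resStep (V : VASS k A) (r : V.Resolver) :
    (List A × Option V.Conf) → A → (List A × Option V.Conf) :=
  fun p a =>
    (p.1 ++ [a],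
      p.2.bind fun c =>
        let t := r p.1 a
        if (c.1, a, t.1, t.2) ∈ V.trans ∧ ∀ i, 0 ≤ ((c.2 i : ℤ) + t.1 i) then
          some (t.2, fun i => ((c.2 i : ℤ) + t.1 i).toNat)
        else none)

/-- The configuration reached by following the resolver on `w` (if the run survives). -/
noncomputable def resRun (V : VASS k A) (r : V.Resolver) (w : List A) : Option V.Conf :=
  (w.foldl (V.resStep r) ([], some V.initConf)).2

/-- History-determinism for coverability acceptance:
some resolver's run accepts every word of the language. -/
def HDCover (V : VASS k A) : Prop :=
  ∃ r : V.Resolver, ∀ w ∈ V.LangCover,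
    ∃ c, V.resRun r w = some c ∧ c.1 ∈ V.acc

/-- History-determinism for reachability acceptance. -/
def HDReach (V : VASS k A) : Prop :=
  ∃ r : V.Resolver, ∀ w ∈ V.LangReach,
    ∃ c, V.resRun r w = some c ∧ c.1 ∈ V.acc ∧ c.2 = fun _ => 0

/-- Coverability language of a VASS with ε-transitions (letter `none` is silent):
the input word is the sequence of actual letters read. -/
def LangCoverE (V : VASS k (Option A)) : Set (List A) :=
  {w | ∃ u c, V.Run V.initConf u c ∧ u.reduceOption = w ∧ c.1 ∈ V.acc}

/-- Reachability language of a VASS with ε-transitions. -/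
def LangReachE (V : VASS k (Option A)) : Set (List A) :=
  {w | ∃ u c, V.Run V.initConf u c ∧ u.reduceOption = w ∧ c.1 ∈ V.acc ∧ c.2 = fun _ => 0}

/-- History-determinism with ε-transitions, coverability: a resolver together with a
(prefix-monotone) scheduling of silent moves accepts every word of the language. -/
def HDCoverE (V : VASS k (Option A)) : Prop :=
  ∃ (r : V.Resolver) (f : List A → List (Option A)),
    (∀ u w, u <+: w → f u <+: f w) ∧
    ∀ w ∈ V.LangCoverE, (f w).reduceOption = w ∧
      ∃ c, V.resRun r (f w) = some c ∧ c.1 ∈ V.acc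

/-- History-determinism with ε-transitions, reachability. -/
def HDReachE (V : VASS k (Option A)) : Prop :=
  ∃ (r : V.Resolver) (f : List A → List (Option A)),
    (∀ u w, u <+: w → f u <+: f w) ∧
    ∀ w ∈ V.LangReachE, (f w).reduceOption = w ∧
      ∃ c, V.resRun r (f w) = some c ∧ c.1 ∈ V.acc ∧ c.2 = fun _ => 0

end VASS

inductive ABC | a | b | c
deriving DecidableEq

open ABC List


namespace VASS

variable {k : ℕ} {A : Type} {V : VASS k A}

lemma Run.append {c₀ c₁ c₂ : V.Conf} {w₁ w₂ : List A}
    (h₁ : V.Run c₀ w₁ c₁) (h₂ : V.Run c₁ w₂ c₂) : V.Run c₀ (w₁ ++ w₂) c₂ := by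
  induction h₁ with
  | nil => exact h₂
  | cons ht hc _ ih => exact Run.cons ht hc (ih h₂)

lemma Run.split {c₀ c₂ : V.Conf} {w₁ w₂ : List A}
    (h : V.Run c₀ (w₁ ++ w₂) c₂) : ∃ c₁, V.Run c₀ w₁ c₁ ∧ V.Run c₁ w₂ c₂ := by
  induction w₁ generalizing c₀ with
  | nil => exact ⟨c₀, Run.nil c₀, h⟩
  | cons x xs ih =>
    rw [List.cons_append] at h
    cases h with
    | cons ht hc hr =>
      obtain ⟨c₁, h₁, h₂⟩ := ih hr
      exact ⟨c₁, Run.cons ht hc h₁, h₂⟩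

lemma Run.det (hd : V.Det) {c₀ c₁ c₂ : V.Conf} {w : List A}
    (h₁ : V.Run c₀ w c₁) (h₂ : V.Run c₀ w c₂) : c₁ = c₂ := by
  induction h₁ generalizing c₂ with
  | nil => cases h₂; rfl
  | cons ht hc _ ih =>
    cases h₂ with
    | cons ht' hc' hr' =>
      obtain ⟨hdq, hq⟩ := hd _ _ _ _ _ _ ht ht'
      subst hdq; subst hq
      exact ih hr'

lemma Run.mono (e : Fin k → ℕ) {c₀ c₁ : V.Conf} {w : List A}
    (h : V.Run c₀ w c₁) :
    V.Run (c₀.1, fun i => c₀.2 i + e i) w (c₁.1, fun i => c₁.2 i + e i) := by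
  induction h with
  | nil => exact Run.nil _
  | @cons q v a d q' w c' ht hc hr ih =>
    refine Run.cons (v := fun i => v i + e i) ht (fun i => ?_) ?_
    · have := hc i; push_cast; push_cast at this; linarith
    · convert ih using 2
      funext i
      have := hc i
      push_cast
      omega

end VASS

/-- The language `a^n b^{≤ n} + a^* b^* c`. -/
def L0 : Set (List ABC) :=
  {w | ∃ n m, m ≤ n ∧ w = replicate n a ++ replicate m b} ∪
  {w | ∃ n m, w = replicate n a ++ replicate m b ++ [c]}

/-- `L0` is not recognised by any deterministic VASS with coverability acceptance. -/
theorem stmt0 : ¬ ∃ (k : ℕ) (V : VASS k ABC), V.Det ∧ V.LangCover = L0 := by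
  rintro ⟨k, V, hd, hL⟩
  have hab : ∀ n m n' m' : ℕ, replicate n a ++ replicate m b =
      replicate n' a ++ replicate m' b → n = n' ∧ m = m' := by
    intro n m n' m' h
    constructor
    · have := congrArg (List.count a) h
      simpa [List.count_append, List.count_replicate] using this
    · have := congrArg (List.count b) h
      simpa [List.count_append, List.count_replicate] using this
  have hmem : ∀ n m : ℕ, (replicate n a ++ replicate m b ∈ L0 ↔ m ≤ n) := by
    intro n m
    simp only [L0, Set.mem_union, Set.mem_setOf_eq]
    constructor
    · rintro (⟨n', m', hle, h⟩ | ⟨n', m', h⟩)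
      · obtain ⟨h1, h2⟩ := hab n m n' m' h; omega
      · exfalso
        have := congrArg (List.count c) h
        simp [List.count_append, List.count_replicate] at this
    · intro hle; exact Or.inl ⟨n, m, hle, rfl⟩
  have hmemc : ∀ n m : ℕ, replicate n a ++ replicate m b ++ [c] ∈ L0 := by
    intro n m
    exact Or.inr ⟨n, m, rfl⟩
  have hrunExists : ∀ n m : ℕ, ∃ cf : V.Conf,
      V.Run V.initConf (replicate n a ++ replicate m b) cf := by
    intro n m
    have h1 : replicate n a ++ replicate m b ++ [c] ∈ V.LangCover := by
      rw [hL]; exact hmemc n m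
    obtain ⟨cf, hr, -⟩ := h1
    obtain ⟨c₁, h₁, -⟩ := hr.split
    exact ⟨c₁, h₁⟩
  choose C hC using hrunExists
  have hacc : ∀ n m : ℕ, ((C n m).1 ∈ V.acc ↔ m ≤ n) := by
    intro n m
    rw [← hmem n m, ← hL]
    constructor
    · intro h; exact ⟨C n m, hC n m, h⟩
    · rintro ⟨cf, hr, hcf⟩
      rwa [VASS.Run.det hd (hC n m) hr]
  have hstep : ∀ n m : ℕ, V.Run V.initConf (replicate n a) (C n 0) ∧
      V.Run (C n 0) (replicate m b) (C n m) := by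
    intro n m
    have h0 : V.Run V.initConf (replicate n a) (C n 0) := by
      have := hC n 0; simpa using this
    obtain ⟨c₁, h₁, h₂⟩ := (hC n m).split
    have hc1 : c₁ = C n 0 := VASS.Run.det hd h₁ h0
    subst hc1
    exact ⟨h₁, h₂⟩
  have key : ∀ N N' : ℕ, N < N' → (C N 0).1 = (C N' 0).1 →
      (C N 0).2 ≤ (C N' 0).2 → False := by
    intro N N' hlt hst hle
    obtain ⟨e, hC'⟩ : ∃ e : Fin k → ℕ,
        (C N' 0) = ((C N 0).1, fun x => (C N 0).2 x + e x) := by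
      have h2 : (C N' 0).2 = fun x => (C N 0).2 x + ((C N' 0).2 x - (C N 0).2 x) := by
        funext x
        have : (C N 0).2 x ≤ (C N' 0).2 x := hle x
        omega
      exact ⟨fun x => (C N' 0).2 x - (C N 0).2 x, Prod.ext hst.symm h2⟩
    have hmono := VASS.Run.mono e (hstep N (N+1)).2
    rw [← hC'] at hmono
    have hrun' : V.Run V.initConf (replicate N' a ++ replicate (N+1) b)
        ((C N (N+1)).1, fun i => (C N (N+1)).2 i + e i) :=
      VASS.Run.append (hstep N' 0).1 hmono
    have heq := VASS.Run.det hd (hC N' (N+1)) hrun'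
    have hacc1 : (C N' (N+1)).1 ∈ V.acc := (hacc N' (N+1)).2 (by omega)
    have hacc2 : (C N (N+1)).1 ∉ V.acc := fun h => by
      have := (hacc N (N+1)).1 h; omega
    rw [heq] at hacc1
    exact hacc2 hacc1
  have hpwo : Set.IsPWO (Set.univ : Set (Fin k → ℕ)) :=
    Set.isPWO_of_wellQuasiOrderedLE Set.univ
  obtain ⟨φ, hφ⟩ := hpwo.exists_monotone_subseq
      (f := fun n => (C n 0).2) (fun _ => Set.mem_univ _)
  obtain ⟨i, j, hij, hst⟩ := Finite.exists_ne_map_eq_of_infinite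
      (fun i : ℕ => (C (φ i) 0).1)
  rcases hij.lt_or_gt with h | h
  · exact key (φ i) (φ j) (φ.strictMono h) hst (hφ h.le)
  · exact key (φ j) (φ i) (φ.strictMono h) hst.symm (hφ h.le)
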